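/- arXiv:2212.14250 — 3 statements merged into one kernel-verified Lean document; each statement's English description precedes it below -/
import Mathlib

section
/- Let H, D, R, T_d > 0, ΔP_{L1} > 0, ΔP_s ≥ 0, T_s ≥ 0, and ΔP'_{L1} = ΔP_{L0} - ΔP_s·e^{(D/(2H))T_s} with ΔP_{L0} = ΔP_{L1} + ΔP_s. Assume ΔP'_{L1} > 0. Then t_n = (2H/D)·ln(T_d·D·ΔP'_{L1}/(2HR) + 1) is the unique positive stationary point of the post-shedding trajectory Δf(t) = (ΔP_{L1}/D + 2HR/(T_d D²))(e^{-(D/(2H))t} - 1) + (R/(T_d D))t + (ΔP_s/D)(1 - e^{(D/(2H))T_s})e^{-(D/(2H))t}, i.e., Δf'(t_n) = 0 and Δf'(t) ≠ 0 for all other t > 0. -/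
open Real

lemma hasDerivAt_mul_exp_neg_mul_add_mul_add (a b c K t : ℝ) :
    HasDerivAt (fun x => a * exp (-K * x) + b * x + c) (b - K * a * exp (-K * t)) t := by
  have hexp : HasDerivAt (fun x => exp (-K * x)) (exp (-K * t) * -K) t :=
    ((hasDerivAt_id t).const_mul (-K)).exp.congr_deriv (by simp)
  exact (((hexp.const_mul a).add ((hasDerivAt_id t).const_mul b)).add_const c).congr_deriv
    (by ring)

lemma sub_mul_exp_neg_mul_eq_zero_iff {a b K : ℝ} (hK : K ≠ 0) (hb : 0 < b) (ha : 0 < K * a)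
    (t : ℝ) : b - K * a * exp (-K * t) = 0 ↔ t = log (K * a / b) / K := by
  rw [sub_eq_zero, eq_comm, mul_comm, ← eq_div_iff_mul_eq ha.ne', ← exp_log (div_pos hb ha),
    exp_eq_exp, log_div hb.ne' ha.ne', log_div ha.ne' hb.ne', eq_div_iff hK]
  constructor <;> intro h <;> linarith

theorem stmt_5_general (H D P0 Ps P1 P1' R Td Ts : ℝ) (hH : 0 < H) (hD : 0 < D)
    (hR : 0 < R) (hTd : 0 < Td)
    (hP0 : P0 = P1 + Ps)
    (hP1' : P1' = P0 - Ps * Real.exp ((D / (2 * H)) * Ts)) (hpos : 0 < P1')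
    (Δf : ℝ → ℝ)
    (hΔf : ∀ t : ℝ, Δf t =
      (P1 / D + 2 * H * R / (Td * D ^ 2)) * (Real.exp (-(D / (2 * H)) * t) - 1)
        + (R / (Td * D)) * t
        + (Ps / D) * (1 - Real.exp ((D / (2 * H)) * Ts)) * Real.exp (-(D / (2 * H)) * t))
    (tn : ℝ) (htn : tn = (2 * H / D) * Real.log (Td * D * P1' / (2 * H * R) + 1)) :
    0 < tn ∧ deriv Δf tn = 0 ∧
      ∀ t : ℝ, 0 < t → t ≠ tn → deriv Δf t ≠ 0 := by
  set K := D / (2 * H)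
  set A := P1 / D + 2 * H * R / (Td * D ^ 2)
  set B := R / (Td * D)
  set C := (Ps / D) * (1 - exp (K * Ts))
  set X := Td * D * P1' / (2 * H * R)
  have hK : 0 < K := by positivity
  have hB : 0 < B := by positivity
  have hX : 0 < X := by positivity
  have hderiv (t : ℝ) : deriv Δf t = B - K * (A + C) * exp (-K * t) := by
    have hΔf' : Δf = fun x => (A + C) * exp (-K * x) + B * x + -A := funext fun x => by
      rw [hΔf]; ring
    exact hΔf' ▸ (hasDerivAt_mul_exp_neg_mul_add_mul_add _ _ _ _ _).deriv
  -- Both sides equal `B + P1' / (2 * H)`.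
  have hcoeff : K * (A + C) = B * (X + 1) := by
    simp only [K, A, B, C, X, hP1', hP0]
    field_simp
    ring
  have hzero (t : ℝ) : deriv Δf t = 0 ↔ t = tn := by
    rw [hderiv, sub_mul_exp_neg_mul_eq_zero_iff hK.ne' hB (by rw [hcoeff]; positivity),
      hcoeff, mul_div_cancel_left₀ _ hB.ne', htn, div_eq_inv_mul, inv_div]
  refine ⟨?_, (hzero tn).2 rfl, fun t _ ht hzt => ht ((hzero t).1 hzt)⟩
  rw [htn]
  exact mul_pos (by positivity) (log_pos (by linarith))

theorem stmt_5 (H D P0 Ps P1 P1' R Td Ts : ℝ) (hH : 0 < H) (hD : 0 < D)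
    (hR : 0 < R) (hTd : 0 < Td) (hP1 : 0 < P1) (hPs : 0 ≤ Ps) (hTs : 0 ≤ Ts)
    (hP0 : P0 = P1 + Ps)
    (hP1' : P1' = P0 - Ps * Real.exp ((D / (2 * H)) * Ts)) (hpos : 0 < P1')
    (Δf : ℝ → ℝ)
    (hΔf : ∀ t : ℝ, Δf t =
      (P1 / D + 2 * H * R / (Td * D ^ 2)) * (Real.exp (-(D / (2 * H)) * t) - 1)
        + (R / (Td * D)) * t
        + (Ps / D) * (1 - Real.exp ((D / (2 * H)) * Ts)) * Real.exp (-(D / (2 * H)) * t))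
    (tn : ℝ) (htn : tn = (2 * H / D) * Real.log (Td * D * P1' / (2 * H * R) + 1)) :
    0 < tn ∧ deriv Δf tn = 0 ∧
      ∀ t : ℝ, 0 < t → t ≠ tn → deriv Δf t ≠ 0 :=
  stmt_5_general H D P0 Ps P1 P1' R Td Ts hH hD hR hTd hP0 hP1' hpos Δf hΔf tn htn
end

section
/- Let Δf₁(t_n) denote the nadir value (2HR/(T_d D²))·ln(T_d D ΔP_{L1}/(2HR) + 1) - ΔP_{L1}/D with H, D, R, T_d, ΔP_{L1} > 0. Then |Δf₁(t_n)| is strictly decreasing in H, i.e., ∂|Δf₁(t_n)|/∂H < 0. -/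
/-!
With `t = T_d D ΔP / (2 H R)` the nadir magnitude is `(ΔP / D) (1 - log (1 + t) / t)`. The factor
`log (1 + t) / t` is the slope of the secant of the strictly concave `log` from `1` to `1 + t`, so it
strictly decreases in `t`, while `t` strictly decreases in `H`.
-/

open Real Set

theorem strictAntiOn_log_add_one_div : StrictAntiOn (fun t : ℝ => log (t + 1) / t) (Ioi 0) := by
  intro s hs t ht hst
  rw [mem_Ioi] at hs ht
  have hs1 : s + 1 ∈ Ioi (0 : ℝ) := by rw [mem_Ioi]; linarith
  have ht1 : t + 1 ∈ Ioi (0 : ℝ) := by rw [mem_Ioi]; linarith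
  simpa using strictConcaveOn_log_Ioi.secant_strict_mono (a := 1) (mem_Ioi.mpr one_pos) hs1 ht1
    (by simpa using hs.ne') (by simpa using ht.ne') (add_lt_add_left hst 1)

theorem stmt_9 (D P1 R Td : ℝ) (hD : 0 < D) (hR : 0 < R) (hTd : 0 < Td)
    (hP1 : 0 < P1) :
    StrictAntiOn
      (fun H : ℝ =>
        P1 / D - (2 * H * R / (Td * D ^ 2)) * Real.log (Td * D * P1 / (2 * H * R) + 1))
      (Set.Ioi 0) := by
  intro H₁ hH₁ H₂ hH₂ hH
  simp only [mem_Ioi] at hH₁ hH₂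
  set t : ℝ → ℝ := fun H => Td * D * P1 / (2 * H * R)
  have ht_pos : ∀ H > 0, 0 < t H := fun H hH => by positivity
  have hnadir : ∀ H > 0, P1 / D - (2 * H * R / (Td * D ^ 2)) * log (t H + 1)
      = P1 / D * (1 - log (t H + 1) / t H) := fun H hH => by
    simp only [t]; field_simp
  have ht_anti : t H₂ < t H₁ := by simp only [t]; gcongr
  have hslope := strictAntiOn_log_add_one_div (ht_pos H₂ hH₂) (ht_pos H₁ hH₁) ht_anti
  show P1 / D - _ * log (t H₂ + 1) < P1 / D - _ * log (t H₁ + 1)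
  rw [hnadir H₁ hH₁, hnadir H₂ hH₂]
  gcongr
end

section
/- For H, D, R, T_d, ΔP_{L1}, Δf'_lim > 0: if HR ≥ ΔP_{L1}²·T_d/(4Δf'_lim) - ΔP_{L1}·T_d·D/4, then ΔP_{L1}/D - (2HR/(T_d D²))·ln(T_d·D·ΔP_{L1}/(2HR) + 1) ≤ Δf'_lim. -/
open Real Set

lemma pade_hasDeriv (y : ℝ) (hy : 0 ≤ y) :
    HasDerivAt (fun x : ℝ => Real.log (1 + x) - 2 * x / (2 + x))
      (1 / (1 + y) - 4 / (2 + y) ^ 2) y := by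
  have h1 : (0:ℝ) < 1 + y := by linarith
  have h2 : (0:ℝ) < 2 + y := by linarith
  have hlog : HasDerivAt (fun x : ℝ => Real.log (1 + x)) (1 / (1 + y)) y := by
    have := ((hasDerivAt_id y).const_add 1).log h1.ne'
    simpa [one_div] using this
  have hnum : HasDerivAt (fun x : ℝ => 2 * x) 2 y := by
    simpa using (hasDerivAt_id y).const_mul 2
  have hden : HasDerivAt (fun x : ℝ => 2 + x) 1 y := by
    simpa using (hasDerivAt_id y).const_add 2
  have hq : HasDerivAt (fun x : ℝ => 2 * x / (2 + x))
      ((2 * (2 + y) - 2 * y * 1) / (2 + y) ^ 2) y := hnum.div hden h2.ne'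
  have : (2 * (2 + y) - 2 * y * 1) / (2 + y) ^ 2 = 4 / (2 + y) ^ 2 := by ring_nf
  rw [this] at hq
  exact hlog.sub hq

lemma pade (x : ℝ) (hx : 0 ≤ x) : 2 * x / (2 + x) ≤ Real.log (1 + x) := by
  set f : ℝ → ℝ := fun x => Real.log (1 + x) - 2 * x / (2 + x) with hf
  have hmono : MonotoneOn f (Ici (0:ℝ)) := by
    apply monotoneOn_of_deriv_nonneg (convex_Ici 0)
    · exact fun y hy =>
        ((pade_hasDeriv y hy).differentiableAt).continuousAt.continuousWithinAt
    · intro y hy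
      rw [interior_Ici] at hy
      exact ((pade_hasDeriv y hy.le).differentiableAt).differentiableWithinAt
    · intro y hy
      rw [interior_Ici] at hy
      rw [(pade_hasDeriv y hy.le).deriv]
      replace hy : 0 < y := hy
      have h1 : (0:ℝ) < 1 + y := by linarith
      have h2 : (0:ℝ) < 2 + y := by linarith
      rw [sub_nonneg, div_le_div_iff₀ (by positivity) h1]
      nlinarith [sq_nonneg y]
  have h0 : f 0 = 0 := by simp [hf]
  have := hmono (self_mem_Ici) (mem_Ici.2 hx) hx
  rw [h0] at this
  simp only [hf] at this
  linarith [this]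

theorem stmt_12 (H D P1 R Td flim : ℝ) (hH : 0 < H) (hD : 0 < D) (hR : 0 < R)
    (hTd : 0 < Td) (hP1 : 0 < P1) (hflim : 0 < flim)
    (hsoc : P1 ^ 2 * Td / (4 * flim) - P1 * Td * D / 4 ≤ H * R) :
    P1 / D - (2 * H * R / (Td * D ^ 2)) * Real.log (Td * D * P1 / (2 * H * R) + 1)
      ≤ flim := by
  set x : ℝ := Td * D * P1 / (2 * H * R) with hx
  have hxpos : 0 < x := by positivity
  have hlog : 2 * x / (2 + x) ≤ Real.log (1 + x) := pade x hxpos.le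
  have hcoef : 0 < 2 * H * R / (Td * D ^ 2) := by positivity
  have hlog' : Real.log (x + 1) = Real.log (1 + x) := by ring_nf
  rw [hlog']
  have step : P1 / D - (2 * H * R / (Td * D ^ 2)) * Real.log (1 + x)
      ≤ P1 / D - (2 * H * R / (Td * D ^ 2)) * (2 * x / (2 + x)) := by
    nlinarith [mul_le_mul_of_nonneg_left hlog hcoef.le]
  refine step.trans ?_
  -- now pure algebra
  have h2x : (0:ℝ) < 2 + x := by linarith
  have ha : (0:ℝ) < 2 * H * R := by positivity
  -- key: Td * P1^2 ≤ flim * (4*H*R + Td*D*P1) from hsoc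
  have hkey : Td * P1 ^ 2 ≤ flim * (4 * H * R + Td * D * P1) := by
    have h1 : P1 ^ 2 * Td / (4 * flim) ≤ H * R + P1 * Td * D / 4 := by linarith
    rw [div_le_iff₀ (by positivity : (0:ℝ) < 4 * flim)] at h1
    nlinarith
  have heq : P1 / D - 2 * H * R / (Td * D ^ 2) * (2 * x / (2 + x))
      = Td * P1 ^ 2 / (4 * H * R + Td * D * P1) := by
    rw [hx]; field_simp; ring
  rw [heq, div_le_iff₀ (by positivity)]
  linarith
end
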